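/- For every integer n ≥ 7, the binomial inequality 3^{n−1}·C(2n−2,n−1)/((2n−3)·16ⁿ) < (C(2n,n)/((2n−1)·4ⁿ))² holds. -/
import Mathlib

lemma aux_binom (m : ℕ) (hm : 6 ≤ m) :
    (3:ℝ) ^ m * ((m:ℝ) + 1) ^ 2 < 4 * (2 * (m:ℝ) - 1) * Nat.centralBinom m := by
  induction m, hm using Nat.le_induction with
  | base =>
    have h : Nat.centralBinom 6 = 924 := by decide
    rw [h]; norm_num
  | succ m hm ih =>
    have hB := Nat.succ_mul_centralBinom_succ m
    have hBR : ((m:ℝ) + 1) * (Nat.centralBinom (m + 1) : ℝ)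
        = 2 * (2 * (m:ℝ) + 1) * (Nat.centralBinom m : ℝ) := by
      exact_mod_cast congrArg (Nat.cast : ℕ → ℝ) hB
    have hBpos : (0:ℝ) < (Nat.centralBinom m : ℝ) := by
      exact_mod_cast (Nat.centralBinom_pos m)
    have hmR : (6:ℝ) ≤ m := by exact_mod_cast hm
    have h3 : (0:ℝ) < (3:ℝ) ^ m := by positivity
    set B1 : ℝ := (Nat.centralBinom m : ℝ) with hB1def
    set B2 : ℝ := (Nat.centralBinom (m+1) : ℝ) with hB2def
    have hpoly : 3*((m:ℝ)+2)^2*((m:ℝ)+1)*(2*(m:ℝ)-1) ≤ 2*(2*(m:ℝ)+1)^2*((m:ℝ)+1)^2 := by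
      nlinarith [sq_nonneg ((m:ℝ)-6)]
    have hP : (3:ℝ)^m * (3*((m:ℝ)+2)^2*((m:ℝ)+1)*(2*(m:ℝ)-1))
        ≤ (3:ℝ)^m * (2*(2*(m:ℝ)+1)^2*((m:ℝ)+1)^2) :=
      mul_le_mul_of_nonneg_left hpoly h3.le
    have H := mul_lt_mul_of_pos_right ih (show (0:ℝ) < 2*(2*(m:ℝ)+1)^2 by nlinarith)
    have key2 : (3:ℝ)^(m+1)*((m:ℝ)+2)^2*((m:ℝ)+1)
        < 4*(2*(m:ℝ)+1)*(2*(2*(m:ℝ)+1)*B1) := by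
      have h2m : (0:ℝ) ≤ 2*(m:ℝ)-1 := by linarith
      refine lt_of_mul_lt_mul_right ?_ h2m
      have e1 : (3:ℝ)^(m+1)*((m:ℝ)+2)^2*((m:ℝ)+1)*(2*(m:ℝ)-1)
          = (3:ℝ)^m * (3*((m:ℝ)+2)^2*((m:ℝ)+1)*(2*(m:ℝ)-1)) := by ring
      rw [e1]
      nlinarith [hP, H]
    push_cast
    refine lt_of_mul_lt_mul_left ?_ (show (0:ℝ) ≤ (m:ℝ)+1 by positivity)
    have hR : ((m:ℝ)+1) * (4*(2*((m:ℝ)+1)-1)*B2) = 4*(2*(m:ℝ)+1)*(2*(2*(m:ℝ)+1)*B1) := by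
      linear_combination (4*(2*(m:ℝ)+1)) * hBR
    nlinarith [key2, hR]

theorem binomial_inequality (n : ℕ) (hn : 7 ≤ n) :
    3 ^ (n - 1) * (Nat.choose (2 * n - 2) (n - 1) : ℝ) / ((2 * (n : ℝ) - 3) * 16 ^ n) <
      ((Nat.choose (2 * n) n : ℝ) / ((2 * (n : ℝ) - 1) * 4 ^ n)) ^ 2 := by
  obtain ⟨m, rfl⟩ : ∃ m, n = m + 1 := ⟨n - 1, by omega⟩
  have hm : 6 ≤ m := by omega
  have h1 : 2 * (m + 1) - 2 = 2 * m := by omega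
  have h2 : m + 1 - 1 = m := by omega
  rw [h1, h2]
  have hc1 : Nat.choose (2 * m) m = Nat.centralBinom m := rfl
  have hc2 : Nat.choose (2 * (m+1)) (m+1) = Nat.centralBinom (m+1) := rfl
  rw [hc1, hc2]
  have key := aux_binom m hm
  have hB := Nat.succ_mul_centralBinom_succ m
  have hBR : ((m:ℝ) + 1) * Nat.centralBinom (m + 1)
      = 2 * (2 * (m:ℝ) + 1) * Nat.centralBinom m := by
    exact_mod_cast congrArg (Nat.cast : ℕ → ℝ) hB
  set B1 : ℝ := (Nat.centralBinom m : ℝ) with hB1def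
  set B2 : ℝ := (Nat.centralBinom (m+1) : ℝ) with hB2def
  have hBpos : (0:ℝ) < B1 := by rw [hB1def]; exact_mod_cast (Nat.centralBinom_pos m)
  have hmR : (6:ℝ) ≤ m := by exact_mod_cast hm
  have h4pos : (0:ℝ) < (4:ℝ) ^ (m+1) := by positivity
  have h16pos : (0:ℝ) < (16:ℝ) ^ (m+1) := by positivity
  have hd1 : (0:ℝ) < (2 * ((m:ℝ)+1) - 3) * 16 ^ (m+1) := by nlinarith
  have hfac : (0:ℝ) < (2 * ((m:ℝ)+1) - 1) * 4 ^ (m+1) := by nlinarith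
  have hd2 : (0:ℝ) < ((2 * ((m:ℝ)+1) - 1) * 4 ^ (m+1)) ^ 2 := by positivity
  push_cast
  rw [div_pow, div_lt_div_iff₀ (by push_cast at hd1 ⊢; linarith) (by push_cast at hd2 ⊢; linarith)]
  have h16 : ((4:ℝ) ^ (m+1)) ^ 2 = 16 ^ (m+1) := by
    rw [← pow_mul, mul_comm, pow_mul]; norm_num
  have hsq : (((m:ℝ)+1) * B2)^2 = (2*(2*(m:ℝ)+1)*B1)^2 := by rw [hBR]
  have H2 : ((m:ℝ)+1)^2 * (B2^2 * ((2*((m:ℝ)+1)-3)*16^(m+1)))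
      = (2*(m:ℝ)-1)*16^(m+1) * (2*(2*(m:ℝ)+1)*B1)^2 := by
    linear_combination ((2*((m:ℝ)+1)-3)*16^(m+1)) * hsq
  have H3 : ((m:ℝ)+1)^2 * ((3:ℝ)^m * B1 * ((2*((m:ℝ)+1)-1)*4^(m+1))^2)
      = ((3:ℝ)^m*((m:ℝ)+1)^2) * (B1*(2*(m:ℝ)+1)^2*16^(m+1)) := by
    rw [← h16]; ring
  have hX : (0:ℝ) < B1*(2*(m:ℝ)+1)^2*16^(m+1) := by positivity
  have H1 := mul_lt_mul_of_pos_right key hX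
  have hfin : ((m:ℝ)+1)^2 * ((3:ℝ)^m * B1 * ((2*((m:ℝ)+1)-1)*4^(m+1))^2)
      < ((m:ℝ)+1)^2 * (B2^2 * ((2*((m:ℝ)+1)-3)*16^(m+1))) := by
    rw [H3, H2]; nlinarith [H1]
  have := lt_of_mul_lt_mul_left hfin (by positivity : (0:ℝ) ≤ ((m:ℝ)+1)^2)
  push_cast at this ⊢
  linarith
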